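/- arXiv:0903.2144 — 6 statements merged into one kernel-verified Lean document; each statement's English description precedes it below -/
import Mathlib

section
/- A semi-separate polynomial map f(x,y) = (x, Q(x,y)) from ℂ² to ℂ² is proper if and only if Q(x,y) is monic with respect to y, i.e., Q(x,y) = a·yⁿ + (terms of lower degree in y) with a ∈ ℂ*. -/
/-!
Over a compact set of values `(x, v)`, the points `y` with `f (x, y) = (x, v)` are the roots of
`Q(x, ·) - v`. When the leading coefficient of `Q` in `y` is a nonzero constant `a`, Cauchy's
bound on these roots is uniform, so `f` is proper.

Conversely, if `Q` has degree `0` in `y`, a fibre of `f` is a whole line. Otherwise let `x₀` be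
a zero of the leading coefficient `L`, and pick `v ≠ Q(x₀, 0)`. By Vieta, the roots of
`Q(x, ·) - v` have product `±(Q(x, 0) - v) / L(x)`, which is unbounded as `x → x₀`, whereas
properness bounds these roots uniformly for `x` near `x₀`.
-/

open Polynomial NNReal Filter Topology Metric

namespace Polynomial

variable {K : Type*}

theorem nnnorm_lt_of_isRoot_of_forall_nnnorm_coeff_le [NormedDivisionRing K] {p : K[X]}
    (hp : p ≠ 0) {M : ℝ≥0} (hM : ∀ i < p.natDegree, ‖p.coeff i‖₊ ≤ M) {z : K}
    (hz : p.IsRoot z) : ‖z‖₊ < M / ‖p.leadingCoeff‖₊ + 1 := by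
  refine (hz.norm_lt_cauchyBound hp).trans_le ?_
  unfold cauchyBound
  gcongr
  exact Finset.sup_le fun i hi => hM i (Finset.mem_range.1 hi)

theorem nnnorm_coeff_zero_le_of_forall_mem_roots [NormedField K] [IsAlgClosed K] (p : K[X])
    {S : ℝ≥0} (hS : ∀ z ∈ p.roots, ‖z‖₊ ≤ S) :
    ‖p.coeff 0‖₊ ≤ ‖p.leadingCoeff‖₊ * S ^ p.natDegree := by
  have hp := IsAlgClosed.splits p
  rw [hp.coeff_zero_eq_leadingCoeff_mul_prod_roots, nnnorm_mul, nnnorm_mul, nnnorm_pow,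
    nnnorm_neg, nnnorm_one, one_pow, one_mul, hp.natDegree_eq_card_roots]
  gcongr
  rw [show ‖p.roots.prod‖₊ = nnnormHom p.roots.prod from rfl, map_multiset_prod,
    ← Multiset.card_map nnnormHom]
  refine Multiset.prod_le_pow_card _ _ fun r hr => ?_
  obtain ⟨z, hz, rfl⟩ := Multiset.mem_map.1 hr
  exact hS z hz

theorem eq_C_of_forall_eval_ne_zero [Field K] [IsAlgClosed K] {p : K[X]}
    (hp : ∀ x, p.eval x ≠ 0) : ∃ a, a ≠ 0 ∧ p = C a := by
  have hroots : p.roots = 0 := Multiset.eq_zero_of_forall_notMem fun x hx =>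
    hp x (isRoot_of_mem_roots hx)
  refine ⟨p.coeff 0, fun h => hp 0 ?_, IsAlgClosed.roots_eq_zero_iff.1 hroots⟩
  rw [IsAlgClosed.roots_eq_zero_iff.1 hroots, h, eval_C]

theorem continuous_evalEval {R : Type*} [CommSemiring R] [TopologicalSpace R]
    [IsTopologicalSemiring R] (Q : R[X][X]) :
    Continuous fun p : R × R => Q.evalEval p.1 p.2 := by
  simp only [← map_evalRingHom_eval, eval_map, eval₂_eq_sum_range]
  exact continuous_finsetSum _ fun i _ =>
    ((Q.coeff i).continuous.comp continuous_fst).mul (continuous_snd.pow i)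

variable [CommRing K] {Q : K[X][X]} {x : K}

theorem natDegree_map_evalRingHom_sub_C (hx : Q.leadingCoeff.eval x ≠ 0) (v : K) :
    (Q.map (evalRingHom x) - C v).natDegree = Q.natDegree := by
  rw [natDegree_sub_C, natDegree_map_of_leadingCoeff_ne_zero _ hx]

theorem leadingCoeff_map_evalRingHom_sub_C (hQ : 0 < Q.natDegree)
    (hx : Q.leadingCoeff.eval x ≠ 0) (v : K) :
    (Q.map (evalRingHom x) - C v).leadingCoeff = Q.leadingCoeff.eval x := by
  rw [leadingCoeff, natDegree_map_evalRingHom_sub_C hx, coeff_sub, coeff_C, if_neg hQ.ne',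
    sub_zero, coeff_map, coeff_natDegree, coe_evalRingHom]

theorem isRoot_map_evalRingHom_sub_C {v y : K} :
    (Q.map (evalRingHom x) - C v).IsRoot y ↔ Q.evalEval x y = v := by
  simp [sub_eq_zero, map_evalRingHom_eval]

end Polynomial

section SemiSeparate

variable {K : Type*} [NontriviallyNormedField K] {Q : K[X][X]}

noncomputable def semiSeparateMap (Q : K[X][X]) (p : K × K) : K × K :=
  (p.1, Q.evalEval p.1 p.2)

theorem continuous_semiSeparateMap (Q : K[X][X]) : Continuous (semiSeparateMap Q) :=
  continuous_fst.prodMk (continuous_evalEval Q)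

theorem isCompact_preimage_semiSeparateMap [ProperSpace K] (hQ : 0 < Q.natDegree) {a : K}
    (ha : a ≠ 0) (hlc : Q.leadingCoeff = C a) {s : Set (K × K)} (hs : IsCompact s) :
    IsCompact (semiSeparateMap Q ⁻¹' s) := by
  have heval : ∀ x : K, Q.leadingCoeff.eval x = a := by simp [hlc]
  set coeffNorms : K × K → ℝ≥0 := fun p =>
    ∑ i ∈ Finset.range Q.natDegree, ‖(Q.map (evalRingHom p.1) - C p.2).coeff i‖₊
  have hcont : Continuous coeffNorms := by
    refine continuous_finsetSum _ fun i _ => Continuous.nnnorm ?_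
    simp only [coeff_sub, coeff_map, coeff_C, coe_evalRingHom]
    split_ifs
    · exact ((Q.coeff i).continuous.comp continuous_fst).sub continuous_snd
    · exact ((Q.coeff i).continuous.comp continuous_fst).sub continuous_const
  obtain ⟨M, hM⟩ := hs.bddAbove_image hcont.continuousOn
  refine ((hs.image continuous_fst).prod (isCompact_closedBall 0 (M / ‖a‖₊ + 1)))
    |>.of_isClosed_subset (hs.isClosed.preimage (continuous_semiSeparateMap Q)) ?_
  rintro ⟨x, y⟩ hxy
  refine ⟨⟨_, hxy, rfl⟩, ?_⟩
  set p := Q.map (evalRingHom x) - C (Q.evalEval x y)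
  have hx : Q.leadingCoeff.eval x ≠ 0 := (heval x).symm ▸ ha
  have hdeg : p.natDegree = Q.natDegree := natDegree_map_evalRingHom_sub_C hx _
  have hcoeff : ∀ i < p.natDegree, ‖p.coeff i‖₊ ≤ M := fun i hi =>
    (Finset.single_le_sum (fun _ _ => zero_le) (Finset.mem_range.2 (hdeg ▸ hi))).trans
      (hM ⟨_, hxy, rfl⟩)
  have hy := nnnorm_lt_of_isRoot_of_forall_nnnorm_coeff_le
    (ne_zero_of_natDegree_gt (hdeg ▸ hQ)) hcoeff (isRoot_map_evalRingHom_sub_C.2 rfl)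
  rw [leadingCoeff_map_evalRingHom_sub_C hQ hx, heval] at hy
  rw [mem_closedBall_zero_iff, ← coe_nnnorm]
  exact_mod_cast hy.le

theorem natDegree_pos_of_isProperMap (hf : IsProperMap (semiSeparateMap Q)) :
    0 < Q.natDegree := by
  by_contra! h0
  obtain ⟨q, rfl⟩ : ∃ q, Q = C q := ⟨_, eq_C_of_natDegree_le_zero h0⟩
  have hline : Prod.snd '' (semiSeparateMap (C q) ⁻¹' {(0, q.eval 0)}) = Set.univ :=
    Set.eq_univ_of_forall fun y => ⟨(0, y), by simp [semiSeparateMap, evalEval_C], rfl⟩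
  exact noncompact_univ K
    (hline ▸ (hf.isCompact_preimage isCompact_singleton).image continuous_snd)

theorem eval_leadingCoeff_ne_zero_of_isProperMap [ProperSpace K] [IsAlgClosed K]
    (hf : IsProperMap (semiSeparateMap Q)) (x₀ : K) : Q.leadingCoeff.eval x₀ ≠ 0 := by
  intro hx₀
  have hQ := natDegree_pos_of_isProperMap hf
  have hL : Q.leadingCoeff ≠ 0 := leadingCoeff_ne_zero.2 (ne_zero_of_natDegree_gt hQ)
  set v := (Q.coeff 0).eval x₀ - 1
  obtain ⟨S, hS⟩ := (hf.isCompact_preimage ((isCompact_closedBall x₀ 1).prod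
    (isCompact_singleton (x := v)))).bddAbove_image (f := fun p => ‖p.2‖₊)
    continuous_snd.nnnorm.continuousOn
  have hLx : ∀ᶠ x in 𝓝[≠] x₀, Q.leadingCoeff.eval x ≠ 0 :=
    nhdsNE_le_cofinite x₀ (finite_setOfPred_isRoot hL).eventually_cofinite_notMem
  have hbound : ∀ᶠ x in 𝓝[≠] x₀,
      ‖(Q.coeff 0).eval x - v‖₊ ≤ ‖Q.leadingCoeff.eval x‖₊ * S ^ Q.natDegree := by
    filter_upwards [nhdsWithin_le_nhds (closedBall_mem_nhds x₀ one_pos), hLx] with x hx hLx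
    have := nnnorm_coeff_zero_le_of_forall_mem_roots (Q.map (evalRingHom x) - C v)
      fun y hy => hS ⟨(x, y),
        ⟨hx, isRoot_map_evalRingHom_sub_C.1 (isRoot_of_mem_roots hy)⟩, rfl⟩
    rwa [natDegree_map_evalRingHom_sub_C hLx, leadingCoeff_map_evalRingHom_sub_C hQ hLx,
      coeff_sub, coeff_map, coeff_C_zero] at this
  have hlim₁ : Tendsto (fun x => ‖(Q.coeff 0).eval x - v‖₊) (𝓝[≠] x₀) (𝓝 1) :=
    (((Q.coeff 0).continuous.sub continuous_const).nnnorm.tendsto' x₀ 1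
      (by simp)).mono_left nhdsWithin_le_nhds
  have hlim₀ :
      Tendsto (fun x => ‖Q.leadingCoeff.eval x‖₊ * S ^ Q.natDegree) (𝓝[≠] x₀) (𝓝 0) :=
    ((Q.leadingCoeff.continuous.nnnorm.mul continuous_const).tendsto' x₀ 0
      (by simp [hx₀])).mono_left nhdsWithin_le_nhds
  exact one_ne_zero (le_antisymm (le_of_tendsto_of_tendsto hlim₁ hlim₀ hbound) zero_le)

theorem isProperMap_semiSeparateMap_iff [ProperSpace K] [IsAlgClosed K] :
    IsProperMap (semiSeparateMap Q) ↔
      0 < Q.natDegree ∧ ∃ a : K, a ≠ 0 ∧ Q.leadingCoeff = C a := by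
  refine ⟨fun hf => ⟨natDegree_pos_of_isProperMap hf,
    eq_C_of_forall_eval_ne_zero (eval_leadingCoeff_ne_zero_of_isProperMap hf)⟩, ?_⟩
  rintro ⟨hQ, a, ha, hlc⟩
  exact isProperMap_iff_isCompact_preimage.2 ⟨continuous_semiSeparateMap Q,
    fun _ hs => isCompact_preimage_semiSeparateMap hQ ha hlc hs⟩

end SemiSeparate

/-- A semi-separate polynomial map `f(x,y) = (x, Q(x,y))` is proper (preimages of
compact sets are compact) iff `Q` is monic with respect to `y`, i.e.
`Q = a·yⁿ + (lower order in y)` with `a ∈ ℂ*` and `n ≥ 1`.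
Here `Q : (ℂ[x])[y]` and the map evaluates `Q` at the point. -/
theorem stmt_2 (Q : Polynomial (Polynomial ℂ)) :
    (∀ K : Set (ℂ × ℂ), IsCompact K →
        IsCompact ((fun p : ℂ × ℂ =>
          (p.1, (Q.map (Polynomial.evalRingHom p.1)).eval p.2)) ⁻¹' K))
      ↔ (0 < Q.natDegree ∧ ∃ a : ℂ, a ≠ 0 ∧ Q.leadingCoeff = Polynomial.C a) := by
  have hmap : (fun p : ℂ × ℂ => (p.1, (Q.map (Polynomial.evalRingHom p.1)).eval p.2)) =
      semiSeparateMap Q := funext fun p => by simp [semiSeparateMap, map_evalRingHom_eval]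
  rw [hmap, ← isProperMap_semiSeparateMap_iff, isProperMap_iff_isCompact_preimage,
    and_iff_right (continuous_semiSeparateMap Q)]
end

section
/- For every d ≥ 2, the element x ∈ ℂ[x,y] satisfies Xᵈ − sX^{d−1} + tX + t = 0 where s = x + y + xy and t = x^{d−1}y, and the element y satisfies Y(s − Y)^{d−1} − t(1 + Y)^{d−1} = 0; consequently ℂ[x,y] is integral over ℂ[x + y + xy, x^{d−1}y] and the map f_d(x,y) = (x + y + xy, x^{d−1}y) is a proper polynomial map of topological degree d. -/
set_option synthInstance.maxHeartbeats 1000000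
open MvPolynomial

/-- The map `f_d(x,y) = (x + y + xy, x^{d-1}y)`. -/
noncomputable def fd (d : ℕ) (p : ℂ × ℂ) : ℂ × ℂ :=
  (p.1 + p.2 + p.1 * p.2, p.1 ^ (d - 1) * p.2)

/-- The Jacobian determinant of `f_d` as a function on `ℂ²`. -/
noncomputable def fdJac (d : ℕ) (p : ℂ × ℂ) : ℂ :=
  (1 + p.2) * p.1 ^ (d - 1) - ((d : ℂ) - 1) * (1 + p.1) * p.1 ^ (d - 2) * p.2

/-!
With `s = x + y + xy` and `t = x^{d-1}y` one has `y(1 + x) = s - x`; multiplying by `x^{d-1}`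
gives the monic equation `x^d - s x^{d-1} + t x + t = 0`, and substituting `x(1 + y) = s - y`
into `t(1 + y)^{d-1}` gives a monic equation for `y`. So both coordinates are integral over
`ℂ[s, t]`, and Cauchy's bound on the roots of these equations bounds `(x, y)` in terms of
`(s, t)`, which is properness. Over a point `(s, t)`, `x` runs through the roots of the first
equation and determines `y`; at a fibre point the derivative of that equation equals the
Jacobian, so off the branch locus its `d` roots are simple and the fibre has `d` points.
-/

section Equations

variable {R : Type*} [CommRing R]

theorem fd_fst_equation {d : ℕ} (hd : 1 ≤ d) (x y : R) :
    x ^ d - (x + y + x * y) * x ^ (d - 1) + (x ^ (d - 1) * y) * x + x ^ (d - 1) * y = 0 := by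
  obtain ⟨n, rfl⟩ := Nat.exists_eq_add_of_le' hd
  simp only [Nat.add_sub_cancel]
  ring

theorem fd_snd_equation (d : ℕ) (x y : R) :
    y * ((x + y + x * y) - y) ^ (d - 1) - (x ^ (d - 1) * y) * (1 + y) ^ (d - 1) = 0 := by
  rw [show x + y + x * y - y = x * (1 + y) by ring, mul_pow]
  ring

end Equations

namespace Polynomial

variable {R : Type*} [CommRing R]

noncomputable def fdFstPoly (d : ℕ) (s t : R) : R[X] :=
  X ^ d - C s * X ^ (d - 1) + C t * X + C t

/-- `(-1)^{d-1} (Y (s - Y)^{d-1} - t (1 + Y)^{d-1})`, the equation of `y` made monic. -/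
noncomputable def fdSndPoly (d : ℕ) (s t : R) : R[X] :=
  X * (X - C s) ^ (d - 1) - C ((-1) ^ (d - 1) * t) * (X + 1) ^ (d - 1)

theorem monic_fdFstPoly {d : ℕ} (hd : 2 ≤ d) (s t : R) : (fdFstPoly d s t).Monic := by
  obtain ⟨n, rfl⟩ := Nat.exists_eq_add_of_le' hd
  unfold fdFstPoly
  monicity!
  simp

theorem monic_fdSndPoly {d : ℕ} (hd : 2 ≤ d) (s t : R) : (fdSndPoly d s t).Monic := by
  obtain ⟨n, rfl⟩ := Nat.exists_eq_add_of_le' hd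
  unfold fdSndPoly
  monicity!

theorem natDegree_fdFstPoly [Nontrivial R] {d : ℕ} (hd : 2 ≤ d) (s t : R) :
    (fdFstPoly d s t).natDegree = d := by
  obtain ⟨n, rfl⟩ := Nat.exists_eq_add_of_le' hd
  unfold fdFstPoly
  compute_degree!
  simp

theorem Monic.norm_lt_of_isRoot {K : Type*} [NormedField K] {p : K[X]} (hp : p.Monic)
    {C : ℝ} (hC : ∀ j < p.natDegree, ‖p.coeff j‖ ≤ C) {a : K} (ha : p.IsRoot a) :
    ‖a‖ < C + 1 := by
  have hdeg : 0 < p.natDegree := hp.natDegree_pos.2 (by rintro rfl; simp at ha)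
  have hC0 : 0 ≤ C := (norm_nonneg _).trans (hC 0 hdeg)
  have hsup : (Finset.range p.natDegree).sup (‖p.coeff ·‖₊) ≤ ⟨C, hC0⟩ :=
    Finset.sup_le fun j hj => hC j (Finset.mem_range.1 hj)
  have hcauchy := ha.norm_lt_cauchyBound hp.ne_zero
  rw [cauchyBound, hp.leadingCoeff, nnnorm_one, div_one] at hcauchy
  exact_mod_cast hcauchy.trans_le (add_le_add_left hsup 1)

theorem card_roots_toFinset_eq_natDegree {K : Type*} [Field K] [IsAlgClosed K] [DecidableEq K]
    {p : K[X]} (hp : p ≠ 0) (h : ∀ z, p.IsRoot z → p.derivative.eval z ≠ 0) :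
    p.roots.toFinset.card = p.natDegree := by
  have hnodup : p.roots.Nodup := by
    refine Multiset.nodup_iff_count_le_one.2 fun z => ?_
    rw [count_roots]
    by_contra! hz
    obtain ⟨hroot, hderiv⟩ := (one_lt_rootMultiplicity_iff_isRoot hp).1 hz
    exact h z hroot hderiv
  rw [Multiset.toFinset_card_of_nodup hnodup, (IsAlgClosed.splits p).natDegree_eq_card_roots]

end Polynomial

theorem MvPolynomial.isIntegral_of_forall_isIntegral_X {R σ : Type*} [CommRing R]
    (A : Subalgebra R (MvPolynomial σ R)) (h : ∀ i, IsIntegral A (X i : MvPolynomial σ R))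
    (q : MvPolynomial σ R) : IsIntegral A q := by
  have hle : Algebra.adjoin R (Set.range X) ≤
      (integralClosure A (MvPolynomial σ R)).restrictScalars R :=
    Algebra.adjoin_le (Set.range_subset_iff.2 h)
  exact hle (by simp [adjoin_range_X])

/-- The easy direction of Jelonek's criterion. -/
theorem isCompact_preimage_of_forall_isIntegral_X {𝕜 σ Y : Type*} [NormedField 𝕜]
    [ProperSpace 𝕜] [Fintype σ] [TopologicalSpace Y] [T2Space Y]
    (A : Subalgebra 𝕜 (MvPolynomial σ 𝕜)) {f : (σ → 𝕜) → Y} (hf : Continuous f)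
    (hA : ∀ a ∈ A, ∃ g : Y → 𝕜, Continuous g ∧ ∀ p, eval p a = g (f p))
    (hX : ∀ i, IsIntegral A (X i : MvPolynomial σ 𝕜)) {K : Set Y} (hK : IsCompact K) :
    IsCompact (f ⁻¹' K) := by
  refine Metric.isCompact_of_isClosed_isBounded (hK.isClosed.preimage hf)
    (Bornology.forall_isBounded_image_eval_iff.1 fun i => ?_)
  obtain ⟨P, hmonic, hroot⟩ := hX i
  choose g hg using fun j => hA _ (P.coeff j).2
  obtain ⟨C, hC⟩ := isBounded_iff_forall_norm_le.1 <|
    (Bornology.isBounded_biUnion_finset (Finset.range P.natDegree)).2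
      fun j _ => (hK.image (hg j).1).isBounded
  refine (Metric.isBounded_closedBall (x := 0) (r := C + 1)).subset ?_
  rintro _ ⟨p, hp, rfl⟩
  let φ := (MvPolynomial.eval p).comp A.val.toRingHom
  rw [mem_closedBall_zero_iff]
  refine ((hmonic.map φ).norm_lt_of_isRoot (fun j hj => hC _ ?_) ?_).le
  · rw [hmonic.natDegree_map] at hj
    rw [Polynomial.coeff_map]
    exact Set.mem_biUnion (Finset.mem_range.2 hj) ⟨f p, hp, ((hg j).2 p).symm⟩
  · have hroot_p := congrArg (MvPolynomial.eval p) hroot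
    rw [Polynomial.hom_eval₂, eval_X, map_zero] at hroot_p
    exact (Polynomial.eval_map φ _).trans hroot_p

noncomputable abbrev fdSubalgebra (d : ℕ) : Subalgebra ℂ (MvPolynomial (Fin 2) ℂ) :=
  Algebra.adjoin ℂ {X 0 + X 1 + X 0 * X 1, X 0 ^ (d - 1) * X 1}

theorem isIntegral_fdSubalgebra_X {d : ℕ} (hd : 2 ≤ d) (i : Fin 2) :
    IsIntegral (fdSubalgebra d) (X i : MvPolynomial (Fin 2) ℂ) := by
  let s : fdSubalgebra d := ⟨X 0 + X 1 + X 0 * X 1, Algebra.subset_adjoin (by simp)⟩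
  let t : fdSubalgebra d := ⟨X 0 ^ (d - 1) * X 1, Algebra.subset_adjoin (by simp)⟩
  fin_cases i
  · refine ⟨Polynomial.fdFstPoly d s t, Polynomial.monic_fdFstPoly hd s t, ?_⟩
    simpa [Polynomial.fdFstPoly, s, t] using
      fd_fst_equation (by omega) (X 0 : MvPolynomial (Fin 2) ℂ) (X 1)
  · refine ⟨Polynomial.fdSndPoly d s t, Polynomial.monic_fdSndPoly hd s t, ?_⟩
    simp only [Polynomial.fdSndPoly, map_mul, map_pow, map_neg, map_one, Polynomial.eval₂_sub,
      Polynomial.eval₂_mul, Polynomial.eval₂_X, Polynomial.eval₂_pow', Polynomial.eval₂_C,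
      Subalgebra.algebraMap_apply, Polynomial.eval₂_add, Polynomial.eval₂_neg,
      Polynomial.eval₂_one, Fin.mk_one, s, t]
    rw [← neg_sub (X 0 + X 1 + X 0 * X 1 : MvPolynomial (Fin 2) ℂ), neg_pow]
    linear_combination (-1) ^ (d - 1) * fd_snd_equation d (X 0 : MvPolynomial (Fin 2) ℂ) (X 1)

theorem continuous_fd (d : ℕ) : Continuous (fd d) := by
  unfold fd
  fun_prop

theorem exists_continuous_eval_eq_comp_fd (d : ℕ) :
    ∀ a ∈ fdSubalgebra d, ∃ g : ℂ × ℂ → ℂ, Continuous g ∧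
      ∀ p : Fin 2 → ℂ, eval p a = g (fd d (Homeomorph.finTwoArrow p)) := by
  intro a ha
  induction ha using Algebra.adjoin_induction with
  | mem a ha =>
    rcases ha with rfl | rfl
    · exact ⟨Prod.fst, continuous_fst, fun p => by simp [fd]⟩
    · exact ⟨Prod.snd, continuous_snd, fun p => by simp [fd]⟩
  | algebraMap c => exact ⟨fun _ => c, continuous_const, fun p => by simp⟩
  | add a b _ _ ha hb =>
    obtain ⟨g, hg, hga⟩ := ha
    obtain ⟨h, hh, hhb⟩ := hb
    exact ⟨g + h, hg.add hh, fun p => by simp [hga, hhb]⟩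
  | mul a b _ _ ha hb =>
    obtain ⟨g, hg, hga⟩ := ha
    obtain ⟨h, hh, hhb⟩ := hb
    exact ⟨g * h, hg.mul hh, fun p => by simp [hga, hhb]⟩

theorem isCompact_preimage_fd {d : ℕ} (hd : 2 ≤ d) {K : Set (ℂ × ℂ)} (hK : IsCompact K) :
    IsCompact (fd d ⁻¹' K) := by
  have hcompact := isCompact_preimage_of_forall_isIntegral_X (fdSubalgebra d)
    ((continuous_fd d).comp Homeomorph.finTwoArrow.continuous)
    (exists_continuous_eval_eq_comp_fd d) (isIntegral_fdSubalgebra_X hd) hK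
  rwa [Set.preimage_comp, Homeomorph.isCompact_preimage] at hcompact

section Fibres

open Polynomial

theorem isRoot_fdFstPoly_of_fd_eq {d : ℕ} (hd : 1 ≤ d) {p w : ℂ × ℂ} (h : fd d p = w) :
    (fdFstPoly d w.1 w.2).IsRoot p.1 := by
  subst h
  simpa [fdFstPoly, fd] using fd_fst_equation hd p.1 p.2

theorem exists_fd_eq_of_isRoot {d : ℕ} (hd : 1 ≤ d) {w : ℂ × ℂ} {z : ℂ}
    (h : (fdFstPoly d w.1 w.2).IsRoot z) : ∃ y, fd d (z, y) = w := by
  obtain ⟨n, rfl⟩ := Nat.exists_eq_add_of_le' hd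
  obtain ⟨s, t⟩ := w
  simp only [fdFstPoly, IsRoot.def, Polynomial.eval_add, Polynomial.eval_sub,
    Polynomial.eval_mul, Polynomial.eval_pow, Polynomial.eval_C, Polynomial.eval_X,
    Nat.add_sub_cancel] at h
  by_cases hz : 1 + z = 0
  · obtain rfl : z = -1 := by linear_combination hz
    have hs : s = -1 := by
      have : (-1 : ℂ) ^ n * (1 + s) = 0 := by linear_combination -h
      linear_combination (mul_eq_zero.1 this).resolve_left (pow_ne_zero _ (by norm_num))
    refine ⟨(-1) ^ n * t, ?_⟩
    simp only [fd, Nat.add_sub_cancel, Prod.mk.injEq]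
    constructor
    · linear_combination -hs
    · rw [← mul_assoc, ← mul_pow]
      norm_num
  · refine ⟨(s - z) / (1 + z), ?_⟩
    simp only [fd, Nat.add_sub_cancel, Prod.mk.injEq]
    constructor
    · field_simp
      ring
    · field_simp
      linear_combination -h

/-- `1 + x` and `x^{d-1}` never vanish together, so `y` is read off from either coordinate. -/
theorem snd_eq_of_fd_eq {d : ℕ} {x y y' : ℂ} (h : fd d (x, y) = fd d (x, y')) : y = y' := by
  simp only [fd, Prod.mk.injEq] at h
  by_contra hy
  have hx : 1 + x = 0 := by
    simpa [sub_ne_zero.2 hy] using (show (1 + x) * (y - y') = 0 by linear_combination h.1)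
  have hx' : x ^ (d - 1) = 0 := by
    simpa [sub_ne_zero.2 hy] using (show x ^ (d - 1) * (y - y') = 0 by linear_combination h.2)
  simp [pow_eq_zero_iff', eq_neg_of_add_eq_zero_right hx] at hx'

theorem eval_derivative_fdFstPoly {d : ℕ} (hd : 2 ≤ d) {p w : ℂ × ℂ} (h : fd d p = w) :
    (derivative (fdFstPoly d w.1 w.2)).eval p.1 = fdJac d p := by
  obtain ⟨n, rfl⟩ := Nat.exists_eq_add_of_le' hd
  simp only [fdFstPoly, derivative_add, derivative_sub, derivative_C_mul, derivative_X_pow,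
    derivative_C, derivative_X]
  subst h
  simp only [fd, fdJac, Nat.cast_add, Nat.cast_ofNat, map_add, map_natCast, map_mul, map_pow,
    Nat.add_one_sub_one, add_tsub_cancel_right, Polynomial.eval_add, Polynomial.eval_sub,
    Polynomial.eval_mul, Polynomial.eval_natCast, Polynomial.eval_C, Polynomial.eval_pow,
    Polynomial.eval_X, Polynomial.eval_one, Polynomial.eval_zero]
  ring

theorem card_fiber_fd {d : ℕ} (hd : 2 ≤ d) {w : ℂ × ℂ}
    (hw : w ∉ fd d '' {p | fdJac d p = 0}) : Nat.card {p // fd d p = w} = d := by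
  classical
  set P := fdFstPoly d w.1 w.2
  have hP : P ≠ 0 := (monic_fdFstPoly hd _ _).ne_zero
  let toRoot (p : {p // fd d p = w}) : P.roots.toFinset :=
    ⟨p.1.1, by simpa [mem_roots hP] using isRoot_fdFstPoly_of_fd_eq (by omega) p.2⟩
  have hinj : toRoot.Injective := by
    rintro ⟨⟨x, y⟩, hp⟩ ⟨⟨x', y'⟩, hp'⟩ h
    obtain rfl : x = x' := congrArg Subtype.val h
    obtain rfl := snd_eq_of_fd_eq (hp.trans hp'.symm)
    rfl
  have hsurj : toRoot.Surjective := by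
    rintro ⟨z, hz⟩
    obtain ⟨y, hy⟩ :=
      exists_fd_eq_of_isRoot (by omega) ((mem_roots hP).1 (Multiset.mem_toFinset.1 hz))
    exact ⟨⟨(z, y), hy⟩, rfl⟩
  rw [Nat.card_congr (Equiv.ofBijective toRoot ⟨hinj, hsurj⟩), Nat.card_eq_finsetCard,
    card_roots_toFinset_eq_natDegree hP, natDegree_fdFstPoly hd]
  intro z hz hderiv
  obtain ⟨y, hy⟩ := exists_fd_eq_of_isRoot (by omega) hz
  exact hw ⟨(z, y), (eval_derivative_fdFstPoly hd hy).symm.trans hderiv, hy⟩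

end Fibres

/-- For `d ≥ 2`, with `s = x + y + xy` and `t = x^{d-1}y`, the element `x` satisfies
`Xᵈ − sX^{d−1} + tX + t = 0` and `y` satisfies `Y(s−Y)^{d−1} − t(1+Y)^{d−1} = 0`;
consequently `ℂ[x,y]` is integral over `ℂ[s,t]`, and `f_d` is proper of topological
degree `d` (every fiber over a point outside the branch locus has `d` points). -/
theorem stmt_5 (d : ℕ) (hd : 2 ≤ d) :
    (X 0 ^ d - (X 0 + X 1 + X 0 * X 1) * X 0 ^ (d - 1)
        + (X 0 ^ (d - 1) * X 1) * X 0 + X 0 ^ (d - 1) * X 1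
      = (0 : MvPolynomial (Fin 2) ℂ)) ∧
    (X 1 * ((X 0 + X 1 + X 0 * X 1) - X 1) ^ (d - 1)
        - (X 0 ^ (d - 1) * X 1) * (1 + X 1) ^ (d - 1)
      = (0 : MvPolynomial (Fin 2) ℂ)) ∧
    (∀ q : MvPolynomial (Fin 2) ℂ,
      IsIntegral (Algebra.adjoin ℂ
        ({X 0 + X 1 + X 0 * X 1, X 0 ^ (d - 1) * X 1} : Set (MvPolynomial (Fin 2) ℂ))) q) ∧
    (∀ K : Set (ℂ × ℂ), IsCompact K → IsCompact (fd d ⁻¹' K)) ∧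
    (∀ w : ℂ × ℂ, w ∉ fd d '' {p | fdJac d p = 0} →
      Nat.card {p : ℂ × ℂ // fd d p = w} = d) :=
  ⟨fd_fst_equation (by omega) _ _, fd_snd_equation d _ _,
    isIntegral_of_forall_isIntegral_X _ (isIntegral_fdSubalgebra_X hd),
    fun _ hK => isCompact_preimage_fd hd hK, fun _ hw => card_fiber_fd hd hw⟩
end

section
/- For every d ≥ 3, the proper polynomial map f_d(x,y) = (x + y + xy, x^{d−1}y) of topological degree d is not equivalent to any semi-separate map (x,y) ↦ (x, Q(x,y)). -/
/-!
Let `d = k + 2` and suppose `(x, Q) = Φ₂ ∘ f ∘ Φ₁` with `f = f_d`. Restrict everything to the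
vertical line `x = a`, where `(a, b) = Φ₂ (-1, 2)`. The roots of `T y = Q(a, y) - b` are the `y`
with `f (Φ₁ (a, y)) = (-1, 2)`; this fibre of `f` has at most `k + 2` points and no critical
point, and `∂Q/∂y = c • (Jac f ∘ Φ₁)` with `c ≠ 0` by the chain rule, so the roots of `T` are
simple and `deg T ≤ k + 2`. On the other hand `T' = c • p ^ k * (p - (k + 1) q - k p q)`, where
`(p, q)` is `Φ₁` restricted to the line. Both `p` and `q` are nonconstant, since the fibre contains
two points that differ in both coordinates, so `deg T' = k deg p + deg p + deg q ≥ k + 2`: a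
contradiction.
-/

open MvPolynomial

/-- A polynomial map `ℂ² → ℂ²`, given by a pair of polynomials. -/
abbrev PolyPair := MvPolynomial (Fin 2) ℂ × MvPolynomial (Fin 2) ℂ

/-- Evaluation of a polynomial pair as a map `ℂ² → ℂ²`. -/
noncomputable def PolyPair.evalMap (f : PolyPair) (p : ℂ × ℂ) : ℂ × ℂ :=
  (MvPolynomial.eval ![p.1, p.2] f.1, MvPolynomial.eval ![p.1, p.2] f.2)

/-- A polynomial pair is a polynomial automorphism of `ℂ²` if it has a polynomial
inverse. -/
def PolyPair.IsPolyAuto (Φ : PolyPair) : Prop :=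
  ∃ Ψ : PolyPair, Φ.evalMap ∘ Ψ.evalMap = id ∧ Ψ.evalMap ∘ Φ.evalMap = id

open scoped Polynomial

theorem Derivation.map_mvPolynomial_aeval {σ R A M : Type*} [Fintype σ] [CommSemiring R]
    [CommSemiring A] [Algebra R A] [AddCommMonoid M] [Module A M] [Module R M]
    [IsScalarTower R A M] (D : Derivation R A M) (s : σ → A) (φ : MvPolynomial σ R) :
    D (aeval s φ) = ∑ i, aeval s (pderiv i φ) • D (s i) := by
  classical
  induction φ using MvPolynomial.induction_on with
  | C c => simp
  | add p q hp hq => simp [hp, hq, add_smul, Finset.sum_add_distrib]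
  | mul_X p i hp =>
    simp [hp, Derivation.leibniz, pderiv_X, Pi.single_apply, add_smul, mul_smul,
      Finset.sum_add_distrib, Finset.smul_sum, apply_ite (aeval s), ite_smul]

theorem MvPolynomial.pderiv_bind₁ {σ τ R : Type*} [Fintype σ] [CommSemiring R]
    (s : σ → MvPolynomial τ R) (i : τ) (φ : MvPolynomial σ R) :
    pderiv i (bind₁ s φ) = ∑ j, bind₁ s (pderiv j φ) * pderiv i (s j) := by
  simp_rw [← aeval_eq_bind₁]
  exact (pderiv i).map_mvPolynomial_aeval s φ

namespace MvPolynomial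

variable {R : Type*} [CommRing R]

noncomputable def restrictFst (a : R) : MvPolynomial (Fin 2) R →ₐ[R] R[X] :=
  aeval ![Polynomial.C a, Polynomial.X]

theorem eval_restrictFst (a y : R) (φ : MvPolynomial (Fin 2) R) :
    (restrictFst a φ).eval y = eval ![a, y] φ := by
  induction φ using MvPolynomial.induction_on with
  | C c => simp [restrictFst]
  | add p q hp hq => simp [hp, hq]
  | mul_X p i hp => fin_cases i <;> simp_all [restrictFst]

theorem derivative_restrictFst (a : R) (φ : MvPolynomial (Fin 2) R) :
    Polynomial.derivative (restrictFst a φ) = restrictFst a (pderiv 1 φ) := by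
  simpa [restrictFst, Fin.sum_univ_two] using
    Polynomial.derivative'.map_mvPolynomial_aeval ![Polynomial.C a, Polynomial.X] φ

end MvPolynomial

namespace Polynomial

variable {K : Type*} [Field K]

theorem natDegree_pos_of_eval_ne {p : K[X]} {x y : K} (h : p.eval x ≠ p.eval y) :
    0 < p.natDegree := by
  by_contra! h0
  rw [eq_C_of_natDegree_le_zero h0] at h
  simp at h

theorem natDegree_eq_card_roots_toFinset_of_simple [IsAlgClosed K] [DecidableEq K] {T : K[X]}
    (hsimple : ∀ y, T.IsRoot y → T.derivative.eval y ≠ 0) :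
    T.natDegree = T.roots.toFinset.card := by
  have hT : T ≠ 0 := by
    rintro rfl
    exact hsimple 0 (by simp) (by simp)
  have hnodup : T.roots.Nodup := by
    refine Multiset.nodup_iff_count_le_one.mpr fun y => ?_
    rw [count_roots]
    by_contra! h
    obtain ⟨hy, hy'⟩ := (one_lt_rootMultiplicity_iff_isRoot hT).mp h
    exact hsimple y hy hy'
  rw [(IsAlgClosed.splits T).natDegree_eq_card_roots, Multiset.toFinset_card_of_nodup hnodup]

theorem natDegree_sub_C_mul_sub_C_mul_mul (α : K) {β : K} (hβ : β ≠ 0) {p q : K[X]}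
    (hp : 0 < p.natDegree) (hq : 0 < q.natDegree) :
    (p - C α * q - C β * p * q).natDegree = p.natDegree + q.natDegree := by
  have hp0 : p ≠ 0 := ne_zero_of_natDegree_gt hp
  have hq0 : q ≠ 0 := ne_zero_of_natDegree_gt hq
  have hprod : (C β * p * q).natDegree = p.natDegree + q.natDegree := by
    rw [mul_assoc, natDegree_C_mul hβ, natDegree_mul hp0 hq0]
  rw [natDegree_sub_eq_right_of_natDegree_lt, hprod]
  calc (p - C α * q).natDegree ≤ max p.natDegree (C α * q).natDegree := natDegree_sub_le _ _
    _ ≤ max p.natDegree q.natDegree := max_le_max_left _ (natDegree_C_mul_le _ _)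
    _ < _ := by rw [hprod]; omega

end Polynomial

namespace PolyPair

noncomputable def subst (Φ : PolyPair) :
    MvPolynomial (Fin 2) ℂ →ₐ[ℂ] MvPolynomial (Fin 2) ℂ :=
  bind₁ ![Φ.1, Φ.2]

noncomputable def comp (Φ Ψ : PolyPair) : PolyPair := (Ψ.subst Φ.1, Ψ.subst Φ.2)

noncomputable def jac (Φ : PolyPair) : MvPolynomial (Fin 2) ℂ :=
  pderiv 0 Φ.1 * pderiv 1 Φ.2 - pderiv 1 Φ.1 * pderiv 0 Φ.2

noncomputable def id : PolyPair := (X 0, X 1)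

@[simp] theorem subst_C (Φ : PolyPair) (c : ℂ) : Φ.subst (C c) = C c := bind₁_C_right _ _

theorem eval_subst (Φ : PolyPair) (φ : MvPolynomial (Fin 2) ℂ) (x y : ℂ) :
    eval ![x, y] (Φ.subst φ) = eval ![(Φ.evalMap (x, y)).1, (Φ.evalMap (x, y)).2] φ := by
  change eval₂Hom (RingHom.id ℂ) _ (bind₁ _ φ) = eval₂Hom (RingHom.id ℂ) _ φ
  rw [eval₂Hom_bind₁]
  congr 2
  ext i
  fin_cases i <;> rfl

theorem evalMap_comp (Φ Ψ : PolyPair) : (Φ.comp Ψ).evalMap = Φ.evalMap ∘ Ψ.evalMap := by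
  funext p
  simp [comp, evalMap, eval_subst]

@[simp] theorem evalMap_id : id.evalMap = _root_.id := by
  funext p
  simp [PolyPair.id, evalMap]

theorem evalMap_injective : Function.Injective evalMap := by
  intro Φ Ψ h
  have key (x : Fin 2 → ℂ) : eval x Φ.1 = eval x Ψ.1 ∧ eval x Φ.2 = eval x Ψ.2 := by
    have hx : ![x 0, x 1] = x := by ext j; fin_cases j <;> rfl
    simpa [evalMap, hx] using congrFun h (x 0, x 1)
  exact Prod.ext (MvPolynomial.funext fun x => (key x).1) (MvPolynomial.funext fun x => (key x).2)

theorem jac_comp (Φ Ψ : PolyPair) : (Φ.comp Ψ).jac = Ψ.subst Φ.jac * Ψ.jac := by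
  simp only [jac, comp, subst, pderiv_bind₁, Fin.sum_univ_two, Matrix.cons_val_zero,
    Matrix.cons_val_one, Matrix.cons_val_fin_one, map_sub, map_mul]
  ring

@[simp] theorem jac_id : id.jac = 1 := by
  simp [jac, PolyPair.id, pderiv_X]

theorem IsPolyAuto.bijective {Φ : PolyPair} (h : Φ.IsPolyAuto) :
    Function.Bijective Φ.evalMap := by
  obtain ⟨Ψ, h₁, h₂⟩ := h
  exact ⟨Function.LeftInverse.injective (congrFun h₂),
    Function.RightInverse.surjective (congrFun h₁)⟩

theorem IsPolyAuto.exists_jac_eq_C {Φ : PolyPair} (h : Φ.IsPolyAuto) :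
    ∃ c : ℂ, c ≠ 0 ∧ Φ.jac = C c := by
  obtain ⟨Ψ, -, h⟩ := h
  have hcomp : Ψ.comp Φ = id := evalMap_injective (by rw [evalMap_comp, h, evalMap_id])
  have hunit : IsUnit Φ.jac := IsUnit.of_mul_eq_one_right _ (by rw [← jac_comp, hcomp, jac_id])
  obtain ⟨c, hc, hΦ⟩ := isUnit_iff_eq_C_of_isReduced.mp hunit
  exact ⟨c, hc.ne_zero, hΦ⟩

noncomputable def semiSep (Q : MvPolynomial (Fin 2) ℂ) : PolyPair := (X 0, Q)

@[simp] theorem evalMap_semiSep (Q : MvPolynomial (Fin 2) ℂ) (p : ℂ × ℂ) :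
    (semiSep Q).evalMap p = (p.1, eval ![p.1, p.2] Q) := by
  simp [semiSep, evalMap]

theorem jac_semiSep (Q : MvPolynomial (Fin 2) ℂ) : (semiSep Q).jac = pderiv 1 Q := by
  simp [jac, semiSep, pderiv_X]

section SemiSeparate

variable {Q : MvPolynomial (Fin 2) ℂ} {F Φ₁ Φ₂ : PolyPair}

theorem exists_pderiv_eq_C_mul_subst_jac
    (hQ : (semiSep Q).evalMap = Φ₂.evalMap ∘ F.evalMap ∘ Φ₁.evalMap)
    (hΦ₁ : Φ₁.IsPolyAuto) (hΦ₂ : Φ₂.IsPolyAuto) :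
    ∃ c : ℂ, c ≠ 0 ∧ pderiv 1 Q = C c * Φ₁.subst F.jac := by
  obtain ⟨c₁, hc₁, h₁⟩ := hΦ₁.exists_jac_eq_C
  obtain ⟨c₂, hc₂, h₂⟩ := hΦ₂.exists_jac_eq_C
  have hcomp : semiSep Q = Φ₂.comp (F.comp Φ₁) :=
    evalMap_injective (by rw [hQ, evalMap_comp, evalMap_comp])
  refine ⟨c₂ * c₁, mul_ne_zero hc₂ hc₁, ?_⟩
  rw [← jac_semiSep, hcomp, jac_comp, jac_comp, h₁, h₂, subst_C, C_mul]
  ring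

theorem eval_eq_snd_evalMap_iff
    (hQ : (semiSep Q).evalMap = Φ₂.evalMap ∘ F.evalMap ∘ Φ₁.evalMap)
    (hΦ₂ : Φ₂.IsPolyAuto) (t : ℂ × ℂ) (y : ℂ) :
    eval ![(Φ₂.evalMap t).1, y] Q = (Φ₂.evalMap t).2 ↔
      F.evalMap (Φ₁.evalMap ((Φ₂.evalMap t).1, y)) = t := by
  have h := congrFun hQ ((Φ₂.evalMap t).1, y)
  simp only [evalMap_semiSep, Function.comp_apply] at h
  rw [← hΦ₂.bijective.injective.eq_iff, ← h, Prod.ext_iff]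
  simp

theorem exists_evalMap_line_eq
    (hQ : (semiSep Q).evalMap = Φ₂.evalMap ∘ F.evalMap ∘ Φ₁.evalMap)
    (hΦ₁ : Φ₁.IsPolyAuto) {t z : ℂ × ℂ}
    (hz : F.evalMap z = t) : ∃ y, Φ₁.evalMap ((Φ₂.evalMap t).1, y) = z := by
  obtain ⟨p, rfl⟩ := hΦ₁.bijective.surjective z
  have hp : p.1 = (Φ₂.evalMap t).1 := by
    simpa [← hz] using congrArg Prod.fst (congrFun hQ p)
  exact ⟨p.2, by rw [← hp]⟩

theorem natDegree_restrictFst_sub_le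
    (hQ : (semiSep Q).evalMap = Φ₂.evalMap ∘ F.evalMap ∘ Φ₁.evalMap)
    (hΦ₁ : Φ₁.IsPolyAuto) (hΦ₂ : Φ₂.IsPolyAuto) {t : ℂ × ℂ} {S : Finset (ℂ × ℂ)}
    (hS : ∀ z, F.evalMap z = t → z ∈ S)
    (hreg : ∀ z, F.evalMap z = t → eval ![z.1, z.2] F.jac ≠ 0) :
    (restrictFst (Φ₂.evalMap t).1 Q - Polynomial.C (Φ₂.evalMap t).2).natDegree ≤ S.card := by
  set a := (Φ₂.evalMap t).1
  set T := restrictFst a Q - Polynomial.C (Φ₂.evalMap t).2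
  have hroot (y : ℂ) : T.IsRoot y ↔ F.evalMap (Φ₁.evalMap (a, y)) = t := by
    simpa [T, eval_restrictFst, sub_eq_zero] using eval_eq_snd_evalMap_iff hQ hΦ₂ t y
  obtain ⟨c, hc, hjac⟩ := exists_pderiv_eq_C_mul_subst_jac hQ hΦ₁ hΦ₂
  have hderiv (y : ℂ) : T.derivative.eval y =
      c * eval ![(Φ₁.evalMap (a, y)).1, (Φ₁.evalMap (a, y)).2] F.jac := by
    simp [T, derivative_restrictFst, eval_restrictFst, hjac, eval_subst]
  rw [Polynomial.natDegree_eq_card_roots_toFinset_of_simple fun y hy => by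
    rw [hderiv]; exact mul_ne_zero hc (hreg _ ((hroot y).mp hy))]
  refine Finset.card_le_card_of_injOn (fun y => Φ₁.evalMap (a, y)) (fun y hy => ?_) ?_
  · rw [Finset.mem_coe, Multiset.mem_toFinset, Polynomial.mem_roots', hroot] at hy
    exact hS _ hy.2
  · intro y _ y' _ h
    exact congrArg Prod.snd (hΦ₁.bijective.injective h)

end SemiSeparate

/-- `f k` is the map `f_{k+2}` of the paper. -/
noncomputable def f (k : ℕ) : PolyPair := (X 0 + X 1 + X 0 * X 1, X 0 ^ (k + 1) * X 1)

variable {k : ℕ}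

@[simp] theorem evalMap_f (z : ℂ × ℂ) :
    (f k).evalMap z = (z.1 + z.2 + z.1 * z.2, z.1 ^ (k + 1) * z.2) := by
  simp [f, evalMap]

theorem jac_f :
    (f k).jac = X 0 ^ k * (X 0 - C ((k : ℂ) + 1) * X 1 - C (k : ℂ) * X 0 * X 1) := by
  simp only [jac, f, map_add, Derivation.leibniz, Derivation.leibniz_pow, pderiv_X_self,
    pderiv_X_of_ne (zero_ne_one' (Fin 2)), pderiv_X_of_ne (zero_ne_one' (Fin 2)).symm, smul_eq_mul,
    nsmul_eq_mul, add_tsub_cancel_right, Nat.cast_add_one, map_natCast, C_1]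
  ring

theorem eval_jac_f (x y : ℂ) :
    eval ![x, y] (f k).jac = x ^ k * (x - (k + 1) * y - k * x * y) := by
  simp [jac_f]

theorem eq_of_evalMap_f_eq {v : ℂ} {z : ℂ × ℂ} (hz : (f k).evalMap z = (-1, v)) :
    z = (-1, (-1) ^ (k + 1) * v) ∨ z.2 = -1 ∧ z.1 ^ (k + 1) = -v := by
  simp only [evalMap_f, Prod.mk.injEq] at hz
  obtain ⟨h₁, h₂⟩ := hz
  have : (z.1 + 1) * (z.2 + 1) = 0 := by linear_combination h₁
  rcases mul_eq_zero.mp this with h | h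
  · left
    have hu : z.1 = -1 := by linear_combination h
    rw [hu] at h₂
    refine Prod.ext hu ?_
    rw [← h₂, ← mul_assoc, ← pow_add, Even.neg_one_pow ⟨k + 1, rfl⟩, one_mul]
  · right
    have hv : z.2 = -1 := by linear_combination h
    exact ⟨hv, by rw [hv] at h₂; linear_combination -h₂⟩

noncomputable def fiberNegOne (k : ℕ) (v : ℂ) : Finset (ℂ × ℂ) :=
  insert (-1, (-1) ^ (k + 1) * v)
    ((Polynomial.X ^ (k + 1) + Polynomial.C v).roots.toFinset.image fun x => (x, -1))

theorem mem_fiberNegOne {v : ℂ} {z : ℂ × ℂ} (hz : (f k).evalMap z = (-1, v)) :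
    z ∈ fiberNegOne k v := by
  rcases eq_of_evalMap_f_eq hz with h | ⟨h₂, h₁⟩
  · simp [fiberNegOne, h]
  · refine Finset.mem_insert_of_mem (Finset.mem_image.mpr ⟨z.1, ?_, by rw [← h₂]⟩)
    rw [Multiset.mem_toFinset, Polynomial.mem_roots (Polynomial.X_pow_add_C_ne_zero k.succ_pos _)]
    simp [h₁]

theorem card_fiberNegOne_le (v : ℂ) : (fiberNegOne k v).card ≤ k + 2 := by
  set g : ℂ[X] := Polynomial.X ^ (k + 1) + Polynomial.C v
  calc (fiberNegOne k v).card ≤ (g.roots.toFinset.image fun x => (x, -1)).card + 1 :=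
        Finset.card_insert_le _ _
    _ ≤ g.roots.toFinset.card + 1 := by gcongr; exact Finset.card_image_le
    _ ≤ g.natDegree + 1 := by
        gcongr; exact (Multiset.toFinset_card_le _).trans (Polynomial.card_roots' _)
    _ = k + 2 := by rw [Polynomial.natDegree_X_pow_add_C]

theorem eval_jac_f_ne_zero {v : ℂ} (hv₀ : v ≠ 0) (hv₁ : v ≠ (-1) ^ k) {z : ℂ × ℂ}
    (hz : (f k).evalMap z = (-1, v)) : eval ![z.1, z.2] (f k).jac ≠ 0 := by
  have hs : ((-1 : ℂ) ^ k) * (-1) ^ k = 1 := by rw [← pow_add, Even.neg_one_pow ⟨k, rfl⟩]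
  rw [eval_jac_f]
  rcases eq_of_evalMap_f_eq hz with rfl | ⟨h₂, h₁⟩
  · refine mul_ne_zero (pow_ne_zero _ (by norm_num)) fun h => hv₁ ?_
    dsimp only at h
    rw [pow_succ] at h
    linear_combination (-v) * hs + (-1) ^ k * h
  · rw [h₂]
    refine mul_ne_zero (pow_ne_zero _ fun h => hv₀ ?_) fun h => hv₁ ?_
    · rw [h, zero_pow k.succ_ne_zero] at h₁
      linear_combination h₁
    · have hx : z.1 = -1 := by
        have : ((k : ℂ) + 1) * (z.1 + 1) = 0 := by linear_combination h
        linear_combination (mul_eq_zero.mp this).resolve_left (Nat.cast_add_one_ne_zero k)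
      rw [hx, pow_succ] at h₁
      linear_combination h₁

theorem exists_evalMap_f_eq_fst_ne_snd_ne {v : ℂ} (hv : v ≠ (-1) ^ k) :
    ∃ z₀ z₁, (f k).evalMap z₀ = (-1, v) ∧ (f k).evalMap z₁ = (-1, v) ∧
      z₀.1 ≠ z₁.1 ∧ z₀.2 ≠ z₁.2 := by
  have hs : ((-1 : ℂ) ^ k) * (-1) ^ k = 1 := by rw [← pow_add, Even.neg_one_pow ⟨k, rfl⟩]
  obtain ⟨x, hx⟩ := IsAlgClosed.exists_pow_nat_eq (-v) (by omega : 0 < k + 1)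
  refine ⟨(-1, (-1) ^ (k + 1) * v), (x, -1), ?_, ?_, fun h => hv ?_, fun h => hv ?_⟩
  · simp only [evalMap_f, Prod.mk.injEq, pow_succ]
    constructor
    · ring
    · linear_combination v * hs
  · simp only [evalMap_f, hx]
    ext <;> simp
  · rw [show x = -1 from h.symm, pow_succ] at hx
    linear_combination hx
  · dsimp only at h
    rw [pow_succ] at h
    linear_combination (-v) * hs - (-1) ^ k * h

theorem f_not_equiv_semiSep (hk : k ≠ 0) {Q : MvPolynomial (Fin 2) ℂ} {Φ₁ Φ₂ : PolyPair}
    (hΦ₁ : Φ₁.IsPolyAuto) (hΦ₂ : Φ₂.IsPolyAuto)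
    (hQ : (semiSep Q).evalMap = Φ₂.evalMap ∘ (f k).evalMap ∘ Φ₁.evalMap) : False := by
  have hv : (2 : ℂ) ≠ (-1) ^ k := by
    rcases neg_one_pow_eq_or ℂ k with h | h <;> rw [h] <;> norm_num
  set a := (Φ₂.evalMap (-1, 2)).1
  set T := restrictFst a Q - Polynomial.C (Φ₂.evalMap (-1, 2)).2
  set p := restrictFst a Φ₁.1
  set q := restrictFst a Φ₁.2
  have hT : T.natDegree ≤ k + 2 :=
    (natDegree_restrictFst_sub_le hQ hΦ₁ hΦ₂ (fun _ => mem_fiberNegOne)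
      (fun _ => eval_jac_f_ne_zero two_ne_zero hv)).trans (card_fiberNegOne_le 2)
  obtain ⟨z₀, z₁, hz₀, hz₁, hne₁, hne₂⟩ := exists_evalMap_f_eq_fst_ne_snd_ne hv
  obtain ⟨y₀, rfl⟩ := exists_evalMap_line_eq hQ hΦ₁ hz₀
  obtain ⟨y₁, rfl⟩ := exists_evalMap_line_eq hQ hΦ₁ hz₁
  have hp : 0 < p.natDegree := Polynomial.natDegree_pos_of_eval_ne (x := y₀) (y := y₁) <| by
    simp only [p, eval_restrictFst]; exact hne₁
  have hq : 0 < q.natDegree := Polynomial.natDegree_pos_of_eval_ne (x := y₀) (y := y₁) <| by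
    simp only [q, eval_restrictFst]; exact hne₂
  obtain ⟨c, hc, hjac⟩ := exists_pderiv_eq_C_mul_subst_jac hQ hΦ₁ hΦ₂
  set r := p - Polynomial.C ((k : ℂ) + 1) * q - Polynomial.C (k : ℂ) * p * q
  have hr : r.natDegree = p.natDegree + q.natDegree :=
    Polynomial.natDegree_sub_C_mul_sub_C_mul_mul _ (Nat.cast_ne_zero.mpr hk) hp hq
  have hT' : Polynomial.derivative T = Polynomial.C c * (p ^ k * r) := by
    simp [T, p, q, r, derivative_restrictFst, hjac, jac_f, subst]
  have hp0 : p ≠ 0 := Polynomial.ne_zero_of_natDegree_gt hp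
  have hr0 : r ≠ 0 := Polynomial.ne_zero_of_natDegree_gt (hr ▸ Nat.add_pos_left hp _)
  have hdeg : k * p.natDegree + (p.natDegree + q.natDegree) ≤ k + 1 :=
    calc _ = (Polynomial.derivative T).natDegree := by
          rw [hT', Polynomial.natDegree_C_mul hc, Polynomial.natDegree_mul (pow_ne_zero _ hp0) hr0,
            Polynomial.natDegree_pow, hr]
      _ ≤ T.natDegree - 1 := Polynomial.natDegree_derivative_le T
      _ ≤ k + 1 := by omega
  nlinarith

end PolyPair

/-- For every `d ≥ 3`, the proper polynomial map `f_d(x,y) = (x + y + xy, x^{d-1}y)`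
is not equivalent to any semi-separate map `(x,y) ↦ (x, Q(x,y))`. -/
theorem stmt_8 (d : ℕ) (hd : 3 ≤ d) :
    ¬ ∃ (Q : MvPolynomial (Fin 2) ℂ) (Φ₁ Φ₂ : PolyPair),
        Φ₁.IsPolyAuto ∧ Φ₂.IsPolyAuto ∧
        ∀ p : ℂ × ℂ,
          (p.1, MvPolynomial.eval ![p.1, p.2] Q)
            = Φ₂.evalMap ((fun q : ℂ × ℂ =>
                (q.1 + q.2 + q.1 * q.2, q.1 ^ (d - 1) * q.2)) (Φ₁.evalMap p)) := by
  rintro ⟨Q, Φ₁, Φ₂, hΦ₁, hΦ₂, hQ⟩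
  obtain ⟨k, rfl⟩ : ∃ k, d = k + 2 := ⟨d - 2, by omega⟩
  refine PolyPair.f_not_equiv_semiSep (k := k) (Q := Q) (by omega) hΦ₁ hΦ₂ (funext fun p => ?_)
  simpa using hQ p
end

section
/- Let m be even and p odd with p | m. Then the group G(m, p, 2) contains exactly m + 3 elements of order 2. -/
/-!
The diagonal involutions of `G(m,p,2)` are the sign matrices `diag(±1, ±1) ≠ 1`; all three lie in
the group because `-1 = θ^(m/2)` and, `p` being odd, `p ∣ m/2`. An antidiagonal matrix
`[[0, a], [b, 0]]` squares to `a b • 1`, so the antidiagonal involutions are the matrices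
`[[0, z], [z⁻¹, 0]]` with `z^m = 1`, and these always lie in the group since `p ∣ m`.
-/

open Matrix

/-- The set of matrices of the group `G(m,p,2)`: diagonal and antidiagonal matrices
with entries powers `θ^{α₁}, θ^{α₂}` of `θ = exp(2πi/m)` with `α₁ + α₂ ≡ 0 (mod p)`. -/
noncomputable def Gmat (m p : ℕ) : Set (Matrix (Fin 2) (Fin 2) ℂ) :=
  {A | ∃ α₁ α₂ : ℕ, p ∣ (α₁ + α₂) ∧
    (A = !![Complex.exp (2 * Real.pi * Complex.I / m) ^ α₁, 0;
            0, Complex.exp (2 * Real.pi * Complex.I / m) ^ α₂] ∨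
     A = !![0, Complex.exp (2 * Real.pi * Complex.I / m) ^ α₁;
            Complex.exp (2 * Real.pi * Complex.I / m) ^ α₂, 0])}

namespace Matrix

variable {R : Type*} [CommRing R]

theorem fin_two_diag_mul_self_eq_one_iff (a b : R) :
    !![a, 0; 0, b] * !![a, 0; 0, b] = 1 ↔ a * a = 1 ∧ b * b = 1 := by
  simp [one_fin_two]

theorem fin_two_antidiag_mul_self_eq_one_iff (a b : R) :
    !![0, a; b, 0] * !![0, a; b, 0] = 1 ↔ a * b = 1 := by
  simp [one_fin_two, mul_comm b a]

theorem fin_two_diag_mem_of_mul_self_eq_one [NoZeroDivisors R] {a b : R}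
    (hsq : !![a, 0; 0, b] * !![a, 0; 0, b] = 1) (hne : !![a, 0; 0, b] ≠ 1) :
    !![a, 0; 0, b] ∈ ({!![-1, 0; 0, -1], !![1, 0; 0, -1], !![-1, 0; 0, 1]} : Set _) := by
  rw [fin_two_diag_mul_self_eq_one_iff] at hsq
  rcases mul_self_eq_one_iff.mp hsq.1 with rfl | rfl <;>
    rcases mul_self_eq_one_iff.mp hsq.2 with rfl | rfl
  · exact absurd one_fin_two.symm hne
  all_goals simp

end Matrix

namespace Gmat

variable {m p : ℕ}

noncomputable abbrev θ (m : ℕ) : ℂ := Complex.exp (2 * Real.pi * Complex.I / m)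

theorem isPrimitiveRoot_θ (hm : 0 < m) : IsPrimitiveRoot (θ m) m :=
  Complex.isPrimitiveRoot_exp m hm.ne'

theorem θ_pow_half (hm : 0 < m) (hme : Even m) : θ m ^ (m / 2) = -1 := by
  have hhalf : m / 2 ∣ m := Nat.div_dvd_of_dvd hme.two_dvd
  have h2 : m / (m / 2) = 2 := Nat.div_div_self hme.two_dvd hm.ne'
  refine IsPrimitiveRoot.eq_neg_one_of_two_right ?_
  simpa [h2] using (isPrimitiveRoot_θ hm).pow_of_dvd (by grind) hhalf

theorem sign_diag_mem (hm : 0 < m) (hme : Even m) (hpo : Odd p) (hpm : p ∣ m) {a b : ℂ}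
    (ha : a * a = 1) (hb : b * b = 1) : !![a, 0; 0, b] ∈ Gmat m p := by
  have hp_half : p ∣ m / 2 :=
    (Nat.coprime_two_right.mpr hpo).dvd_of_dvd_mul_right
      (by rwa [Nat.div_mul_cancel hme.two_dvd])
  have hsign : ∀ c : ℂ, c * c = 1 → ∃ k, p ∣ k ∧ θ m ^ k = c := by
    intro c hc
    rcases mul_self_eq_one_iff.mp hc with rfl | rfl
    · exact ⟨0, dvd_zero p, pow_zero _⟩
    · exact ⟨m / 2, hp_half, θ_pow_half hm hme⟩
  obtain ⟨k, hk, rfl⟩ := hsign a ha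
  obtain ⟨l, hl, rfl⟩ := hsign b hb
  exact ⟨k, l, dvd_add hk hl, Or.inl rfl⟩

theorem antidiag_inv_mem (hm : 0 < m) (hpm : p ∣ m) {z : ℂ} (hz : z ^ m = 1) :
    !![0, z; z⁻¹, 0] ∈ Gmat m p := by
  have : NeZero m := ⟨hm.ne'⟩
  have hθ := isPrimitiveRoot_θ hm
  obtain ⟨a, ha, rfl⟩ := hθ.eq_pow_of_pow_eq_one hz
  have hinv : (θ m ^ a)⁻¹ = θ m ^ (m - a) :=
    inv_eq_of_mul_eq_one_right (by rw [← pow_add, Nat.add_sub_cancel' ha.le, hθ.pow_eq_one])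
  refine ⟨a, m - a, ?_, Or.inr ?_⟩
  · rwa [Nat.add_sub_cancel' ha.le]
  · rw [hinv]

theorem involutions_eq (hm : 0 < m) (hme : Even m) (hpo : Odd p) (hpm : p ∣ m) :
    {A ∈ Gmat m p | A * A = 1 ∧ A ≠ 1} =
      (fun z : ℂ => !![0, z; z⁻¹, 0]) '' {z | z ^ m = 1} ∪
        {!![-1, 0; 0, -1], !![1, 0; 0, -1], !![-1, 0; 0, 1]} := by
  ext A
  constructor
  · rintro ⟨⟨α₁, α₂, -, rfl | rfl⟩, hsq, hne⟩
    · exact Or.inr (fin_two_diag_mem_of_mul_self_eq_one hsq hne)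
    · rw [fin_two_antidiag_mul_self_eq_one_iff] at hsq
      refine Or.inl ⟨θ m ^ α₁, ?_, by simp [inv_eq_of_mul_eq_one_right hsq]⟩
      rw [Set.mem_ofPred_eq, ← pow_mul, mul_comm, pow_mul, (isPrimitiveRoot_θ hm).pow_eq_one, one_pow]
  · rintro (⟨z, hz, rfl⟩ | hA)
    · have hz0 : z ≠ 0 := by rintro rfl; simp [hm.ne'] at hz
      refine ⟨antidiag_inv_mem hm hpm hz, ?_, by simp [one_fin_two]⟩
      exact (fin_two_antidiag_mul_self_eq_one_iff _ _).mpr (mul_inv_cancel₀ hz0)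
    · rcases hA with rfl | rfl | rfl <;>
        exact ⟨sign_diag_mem hm hme hpo hpm (by norm_num) (by norm_num),
          by simp [one_fin_two], by rw [one_fin_two]; norm_num⟩

end Gmat

/-- For `m` even and `p` odd with `p ∣ m`, the group `G(m,p,2)` contains exactly
`m + 3` elements of order `2`. -/
theorem stmt_14 (m p : ℕ) (hm : 0 < m) (hme : Even m) (hpo : Odd p) (hpm : p ∣ m) :
    {A ∈ Gmat m p | A * A = 1 ∧ A ≠ 1}.ncard = m + 3 := by
  have hinj : Function.Injective fun z : ℂ => !![0, z; z⁻¹, 0] := fun z w h => by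
    simpa using congrFun (congrFun h 0) 1
  have hthree : ({!![-1, 0; 0, -1], !![1, 0; 0, -1], !![-1, 0; 0, 1]} :
      Set (Matrix (Fin 2) (Fin 2) ℂ)).ncard = 3 :=
    Set.ncard_eq_three.mpr ⟨_, _, _, by norm_num, by norm_num, by norm_num, rfl⟩
  rw [Gmat.involutions_eq hm hme hpo hpm, ← Polynomial.nthRootsFinset_toSet hm, Set.ncard_union_eq,
    Set.ncard_image_of_injective _ hinj, Set.ncard_coe_finset,
    (Gmat.isPrimitiveRoot_θ hm).card_nthRootsFinset, hthree]
  rw [Set.disjoint_left]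
  rintro _ ⟨z, -, rfl⟩
  simp
end

section
/- Let m be even and p odd with p | m. The group G(2m, 4p, 2) contains 2m + 3 elements of order 2 if 4 | m, and 2m + 1 elements of order 2 if 4 ∤ m. -/
open Matrix

/-! For `q ∣ n`, the group `G(n,q,2)` consists of the matrices `diag(a, b)` and `antidiag(a, b)`
with `aⁿ = bⁿ = 1` and `(ab)^(n/q) = 1`. Since `antidiag(a, b)² = ab · 1`, the antidiagonal
involutions are the `antidiag(a, a⁻¹)`, one for each of the `n` roots of unity `a`. A diagonal
involution has entries `±1`, not both `1`: `diag(-1, -1)` always lies in the group, while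
`diag(1, -1)` and `diag(-1, 1)` do exactly when `n / q` is even. For `n = 2m` and `q = 4p` with
`p` odd, `n / q = m / (2p)`, which is even iff `4 ∣ m`. -/

theorem IsPrimitiveRoot.pow_pow_div_eq_one_iff {R : Type*} [CommMonoid R] {θ : R} {n q : ℕ}
    (hθ : IsPrimitiveRoot θ n) (hn : 0 < n) (hq : q ∣ n) (α : ℕ) :
    (θ ^ α) ^ (n / q) = 1 ↔ q ∣ α := by
  obtain ⟨r, rfl⟩ := hq
  rw [← pow_mul, hθ.pow_eq_one_iff_dvd, Nat.mul_div_cancel_left r (Nat.pos_of_mul_pos_right hn),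
    Nat.mul_dvd_mul_iff_right (Nat.pos_of_mul_pos_left hn)]

theorem mem_Gmat_iff {n q : ℕ} (hn : 0 < n) (hq : q ∣ n) {A : Matrix (Fin 2) (Fin 2) ℂ} :
    A ∈ Gmat n q ↔ ∃ a b : ℂ, a ^ n = 1 ∧ b ^ n = 1 ∧ (a * b) ^ (n / q) = 1 ∧
      (A = !![a, 0; 0, b] ∨ A = !![0, a; b, 0]) := by
  have hθ := Complex.isPrimitiveRoot_exp n hn.ne'
  have : NeZero n := ⟨hn.ne'⟩
  constructor
  · rintro ⟨α₁, α₂, hdvd, hA⟩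
    have hroot (α : ℕ) : (Complex.exp (2 * Real.pi * Complex.I / n) ^ α) ^ n = 1 := by
      rw [pow_right_comm, hθ.pow_eq_one, one_pow]
    refine ⟨_, _, hroot α₁, hroot α₂, ?_, hA⟩
    rwa [← pow_add, hθ.pow_pow_div_eq_one_iff hn hq]
  · rintro ⟨a, b, ha, hb, hab, hA⟩
    obtain ⟨α₁, -, rfl⟩ := hθ.eq_pow_of_pow_eq_one ha
    obtain ⟨α₂, -, rfl⟩ := hθ.eq_pow_of_pow_eq_one hb
    rw [← pow_add, hθ.pow_pow_div_eq_one_iff hn hq] at hab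
    exact ⟨α₁, α₂, hab, hA⟩

section TwoByTwo

variable {R : Type*} [CommRing R]

theorem diag_fin_two_mul_self_eq_one_iff (a b : R) :
    !![a, 0; 0, b] * !![a, 0; 0, b] = 1 ↔ a ^ 2 = 1 ∧ b ^ 2 = 1 := by
  simp [Matrix.one_fin_two, sq]

theorem antidiag_fin_two_mul_self_eq_one_iff (a b : R) :
    !![0, a; b, 0] * !![0, a; b, 0] = 1 ↔ a * b = 1 := by
  simp [Matrix.one_fin_two, mul_comm b a]

theorem diag_fin_two_eq_one_iff (a b : R) : !![a, 0; 0, b] = 1 ↔ a = 1 ∧ b = 1 := by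
  simp [Matrix.one_fin_two]

theorem antidiag_fin_two_ne_one [Nontrivial R] (a b : R) : !![0, a; b, 0] ≠ 1 := by
  intro h
  simpa using congrFun (congrFun h 0) 0

end TwoByTwo

def signPairs (k : ℕ) : Set (ℂ × ℂ) :=
  {ab | ab.1 ^ 2 = 1 ∧ ab.2 ^ 2 = 1 ∧ (ab.1 * ab.2) ^ k = 1 ∧ ab ≠ (1, 1)}

theorem signPairs_eq (k : ℕ) :
    signPairs k = if Even k then {(-1, -1), (1, -1), (-1, 1)} else {(-1, -1)} := by
  ext ⟨a, b⟩
  simp only [signPairs, Set.mem_ofPred_eq, sq_eq_one_iff]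
  split_ifs with hk
  · simp only [Set.mem_insert_iff, Set.mem_singleton_iff, Prod.mk.injEq]
    constructor
    · rintro ⟨rfl | rfl, rfl | rfl, -, hne⟩ <;> simp_all
    · rintro (⟨rfl, rfl⟩ | ⟨rfl, rfl⟩ | ⟨rfl, rfl⟩) <;> norm_num [hk.neg_one_pow]
  · rw [Nat.not_even_iff_odd] at hk
    simp only [Set.mem_singleton_iff, Prod.mk.injEq]
    constructor
    · rintro ⟨rfl | rfl, rfl | rfl, hpow, hne⟩ <;> simp_all [hk.neg_one_pow]
    · rintro ⟨rfl, rfl⟩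
      norm_num

theorem ncard_signPairs (k : ℕ) : (signPairs k).ncard = if Even k then 3 else 1 := by
  rw [signPairs_eq]
  split_ifs
  · rw [Set.ncard_insert_of_notMem (by norm_num), Set.ncard_pair (by norm_num)]
  · exact Set.ncard_singleton _

theorem involutions_Gmat_eq {n q : ℕ} (hn : 0 < n) (hne : Even n) (hq : q ∣ n) :
    {A ∈ Gmat n q | A * A = 1 ∧ A ≠ 1} =
      (fun a : ℂ => !![0, a; a⁻¹, 0]) '' {a | a ^ n = 1} ∪
        (fun ab : ℂ × ℂ => !![ab.1, 0; 0, ab.2]) '' signPairs (n / q) := by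
  ext A
  simp only [signPairs, Set.mem_ofPred_eq, mem_Gmat_iff hn hq, Set.mem_union, Set.mem_image]
  constructor
  · rintro ⟨⟨a, b, ha, hb, hab, rfl | rfl⟩, hsq, hne1⟩
    · rw [diag_fin_two_mul_self_eq_one_iff] at hsq
      rw [ne_eq, diag_fin_two_eq_one_iff] at hne1
      exact Or.inr ⟨(a, b), ⟨hsq.1, hsq.2, hab, fun h => hne1 (Prod.ext_iff.1 h)⟩, rfl⟩
    · rw [antidiag_fin_two_mul_self_eq_one_iff] at hsq
      exact Or.inl ⟨a, ha, by rw [eq_inv_of_mul_eq_one_right hsq]⟩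
  · rintro (⟨a, ha, rfl⟩ | ⟨⟨a, b⟩, ⟨ha, hb, hab, hne1⟩, rfl⟩)
    · have ha0 : a ≠ 0 := by
        rintro rfl
        simp [hn.ne'] at ha
      refine ⟨⟨a, a⁻¹, ha, by rw [inv_pow, ha, inv_one], by rw [mul_inv_cancel₀ ha0, one_pow],
        Or.inr rfl⟩, (antidiag_fin_two_mul_self_eq_one_iff _ _).2 (mul_inv_cancel₀ ha0),
        antidiag_fin_two_ne_one _ _⟩
    · obtain ⟨k, hk⟩ := hne.two_dvd
      refine ⟨⟨a, b, by rw [hk, pow_mul, ha, one_pow], by rw [hk, pow_mul, hb, one_pow], hab,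
        Or.inl rfl⟩, (diag_fin_two_mul_self_eq_one_iff _ _).2 ⟨ha, hb⟩, ?_⟩
      rw [ne_eq, diag_fin_two_eq_one_iff]
      exact fun h => hne1 (Prod.ext h.1 h.2)

theorem ncard_involutions_Gmat {n q : ℕ} (hn : 0 < n) (hne : Even n) (hq : q ∣ n) :
    {A ∈ Gmat n q | A * A = 1 ∧ A ≠ 1}.ncard = n + if Even (n / q) then 3 else 1 := by
  have hroots : {a : ℂ | a ^ n = 1} = Polynomial.nthRootsFinset n (1 : ℂ) := by
    ext
    simp [Polynomial.mem_nthRootsFinset hn]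
  have hdisj : ∀ a ∈ {a : ℂ | a ^ n = 1}, ∀ ab ∈ signPairs (n / q),
      !![0, a; a⁻¹, 0] ≠ !![ab.1, 0; 0, ab.2] := by
    rintro a - ⟨b, c⟩ ⟨hb, -⟩ h
    have hb0 : b = 0 := by simpa using (congrFun (congrFun h 0) 0).symm
    simp [hb0] at hb
  have hinj_anti : Function.Injective fun a : ℂ => !![0, a; a⁻¹, 0] := fun a b h => by
    simpa using congrFun (congrFun h 0) 1
  have hinj_diag : Function.Injective fun ab : ℂ × ℂ => !![ab.1, 0; 0, ab.2] := fun a b h =>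
    Prod.ext (by simpa using congrFun (congrFun h 0) 0) (by simpa using congrFun (congrFun h 1) 1)
  have hfin_signs : (signPairs (n / q)).Finite :=
    Set.finite_of_ncard_ne_zero (by rw [ncard_signPairs]; split_ifs <;> norm_num)
  rw [involutions_Gmat_eq hn hne hq,
    Set.ncard_union_eq (Set.disjoint_image_image hdisj)
      ((hroots ▸ Finset.finite_toSet _).image _) (hfin_signs.image _),
    Set.ncard_image_of_injective _ hinj_anti, Set.ncard_image_of_injective _ hinj_diag, hroots,
    Set.ncard_coe_finset, (Complex.isPrimitiveRoot_exp n hn.ne').card_nthRootsFinset,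
    ncard_signPairs]

theorem two_mul_dvd_of_even_of_odd {m p : ℕ} (hme : Even m) (hpo : Odd p) (hpm : p ∣ m) :
    2 * p ∣ m :=
  (Nat.coprime_two_left.2 hpo).mul_dvd_of_dvd_of_dvd hme.two_dvd hpm

theorem even_two_mul_div_four_mul_iff {m p : ℕ} (hme : Even m) (hpo : Odd p) (hpm : p ∣ m) :
    Even (2 * m / (4 * p)) ↔ 4 ∣ m := by
  obtain ⟨j, rfl⟩ := two_mul_dvd_of_even_of_odd hme hpo hpm
  rw [show 2 * (2 * p * j) = 4 * p * j by ring, Nat.mul_div_cancel_left _ (by positivity [hpo.pos]),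
    mul_assoc]
  have hodd_factor : Even (p * j) ↔ Even j := by simp [Nat.even_mul, Nat.not_even_iff_odd.2 hpo]
  rw [← hodd_factor, even_iff_two_dvd]
  omega

/-- For `m` even and `p` odd with `p ∣ m`, the group `G(2m,4p,2)` contains `2m + 3`
elements of order `2` if `4 ∣ m`, and `2m + 1` such elements if `4 ∤ m`. -/
theorem stmt_15 (m p : ℕ) (hm : 0 < m) (hme : Even m) (hpo : Odd p) (hpm : p ∣ m) :
    {A ∈ Gmat (2 * m) (4 * p) | A * A = 1 ∧ A ≠ 1}.ncard
      = if 4 ∣ m then 2 * m + 3 else 2 * m + 1 := by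
  obtain ⟨j, hj⟩ := two_mul_dvd_of_even_of_odd hme hpo hpm
  rw [ncard_involutions_Gmat (by omega) (even_two_mul m) ⟨j, by rw [hj]; ring⟩]
  simp only [even_two_mul_div_four_mul_iff hme hpo hpm]
  split_ifs <;> rfl
end

section
/- The abstract group with presentation ⟨s, t, z | s² = z, t³ = z², (st)³ = z², [s,z] = 1, [t,z] = 1, z² = 1⟩ is isomorphic to SL(2, 𝔽₃) and has order 24. -/
/-!
In this group `z` is central of order 2, `t` has order 3, and `(st)³ = 1` gives the braid-type
identity `tst = st⁻¹s`. Put `j = tst⁻¹` and `k = t⁻¹st`: the eight elements `zᵃq` with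
`q ∈ {1, s, j, k}` form a quaternion group that is closed under right multiplication by `s` and `z`
and normalised by `t`. Hence the 24 products `tᶜzᵃq` (`c < 3`) are closed under right
multiplication by the generators, so they exhaust the group. Conversely, `s, t, z` can be sent to
matrices of `SL(2, 𝔽₃)` satisfying the relations, under which these 24 words become the 24 distinct
elements of `SL(2, 𝔽₃)`; the induced surjection between groups of order 24 is an isomorphism.
-/

/-- The relations of the presentation
`⟨s, t, z | s² = z, t³ = z², (st)³ = z², [s,z] = 1, [t,z] = 1, z² = 1⟩`,
with `s, t, z` the generators `0, 1, 2`. -/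
def G4rels : Set (FreeGroup (Fin 3)) :=
  { FreeGroup.of 0 ^ 2 * (FreeGroup.of 2)⁻¹,
    FreeGroup.of 1 ^ 3 * (FreeGroup.of 2 ^ 2)⁻¹,
    (FreeGroup.of 0 * FreeGroup.of 1) ^ 3 * (FreeGroup.of 2 ^ 2)⁻¹,
    FreeGroup.of 0 * FreeGroup.of 2 * (FreeGroup.of 0)⁻¹ * (FreeGroup.of 2)⁻¹,
    FreeGroup.of 1 * FreeGroup.of 2 * (FreeGroup.of 1)⁻¹ * (FreeGroup.of 2)⁻¹,
    FreeGroup.of 2 ^ 2 }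

theorem Set.Finite.eq_univ_of_forall_mul_mem {G : Type*} [Group G] {S T : Set G}
    (hS : S.Finite) (hT : Subgroup.closure T = ⊤) (h1 : 1 ∈ S)
    (hmul : ∀ g ∈ S, ∀ x ∈ T, g * x ∈ S) : S = Set.univ := by
  have key (x : G) : Set.MapsTo (· * x) S S := by
    induction (hT ▸ Subgroup.mem_top x : x ∈ Subgroup.closure T) using
      Subgroup.closure_induction with
    | mem x hx => exact fun g hg => hmul g hg x hx
    | one => exact fun g hg => by simpa using hg
    | mul x y _ _ hx hy => exact fun g hg => by simpa [mul_assoc] using hy (hx hg)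
    | inv x _ hx =>
      intro g hg
      obtain ⟨h, hh, rfl⟩ :=
        ((hS.injOn_iff_bijOn_of_mapsTo hx).1 (mul_left_injective x).injOn).surjOn hg
      simpa using hh
  exact Set.eq_univ_of_forall fun x => by simpa using key x h1

namespace G4

/-- `z` plays the role of `-1`: these are `±1, ±i, ±j, ±k`. -/
def quat {H : Type*} [Mul H] [One H] (z i j k : H) : Fin 8 → H :=
  ![1, i, j, k, z, z * i, z * j, z * k]

def normalForm {H : Type*} [Monoid H] (t z i j k : H) (p : Fin 3 × Fin 8) : H :=
  t ^ (p.1 : ℕ) * quat z i j k p.2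

theorem map_normalForm {H K F : Type*} [Monoid H] [Monoid K] [FunLike F H K]
    [MonoidHomClass F H K] (f : F) (t z i j k : H) (p : Fin 3 × Fin 8) :
    f (normalForm t z i j k p) = normalForm (f t) (f z) (f i) (f j) (f k) p := by
  obtain ⟨c, b⟩ := p
  fin_cases b <;> simp [normalForm, quat]

local notation "G" => PresentedGroup G4rels

def s : G := .of 0
def t : G := .of 1
def z : G := .of 2

lemma s_sq : s ^ 2 = z :=
  mul_inv_eq_one.1 <| PresentedGroup.one_of_mem
    (x := FreeGroup.of 0 ^ 2 * (FreeGroup.of 2)⁻¹) (by simp [G4rels])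

lemma z_sq : z ^ 2 = 1 :=
  PresentedGroup.one_of_mem (x := FreeGroup.of 2 ^ 2) (by simp [G4rels])

lemma t_pow_three : t ^ 3 = 1 :=
  (mul_inv_eq_one.1 <| PresentedGroup.one_of_mem
    (x := FreeGroup.of 1 ^ 3 * (FreeGroup.of 2 ^ 2)⁻¹) (by simp [G4rels])).trans z_sq

lemma s_mul_t_pow_three : (s * t) ^ 3 = 1 :=
  (mul_inv_eq_one.1 <| PresentedGroup.one_of_mem
    (x := (FreeGroup.of 0 * FreeGroup.of 1) ^ 3 * (FreeGroup.of 2 ^ 2)⁻¹)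
    (by simp [G4rels])).trans z_sq

lemma commute_s_z : Commute s z :=
  commutatorElement_eq_one_iff_commute.1 <| PresentedGroup.one_of_mem
    (x := FreeGroup.of 0 * FreeGroup.of 2 * (FreeGroup.of 0)⁻¹ * (FreeGroup.of 2)⁻¹)
    (by simp [G4rels])

lemma commute_t_z : Commute t z :=
  commutatorElement_eq_one_iff_commute.1 <| PresentedGroup.one_of_mem
    (x := FreeGroup.of 1 * FreeGroup.of 2 * (FreeGroup.of 1)⁻¹ * (FreeGroup.of 2)⁻¹)
    (by simp [G4rels])

lemma commute_z (g : G) : Commute g z := by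
  refine Subgroup.mem_centralizer_singleton_iff.1 <|
    PresentedGroup.generated_by _ (Subgroup.centralizer {z}) (fun i => ?_) g
  rw [Subgroup.mem_centralizer_singleton_iff]
  fin_cases i
  exacts [commute_s_z, commute_t_z, rfl]

lemma z_mul_z : z * z = 1 := by rw [← sq, z_sq]

lemma z_mul_z_mul (g : G) : z * (z * g) = g := by rw [← mul_assoc, z_mul_z, one_mul]

lemma s_mul_s : s * s = z := by rw [← sq, s_sq]

lemma s_inv : s⁻¹ = z * s := by
  rw [inv_eq_iff_mul_eq_one, ← mul_assoc, (commute_z s).eq, mul_assoc, s_mul_s, z_mul_z]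

lemma t_inv : t⁻¹ = t * t := inv_eq_of_mul_eq_one_right (by rw [← pow_three, t_pow_three])

lemma t_inv_mul_t_inv : t⁻¹ * t⁻¹ = t := by rw [← mul_inv_rev, ← t_inv, inv_inv]

lemma t_mul_s_mul_t : t * s * t = s * t⁻¹ * s := calc
  t * s * t = s⁻¹ * (s * t) ^ 3 * t⁻¹ * s⁻¹ := by rw [pow_three]; group
  _ = z * (z * (s * t⁻¹ * s)) := by
    rw [s_mul_t_pow_three, s_inv, mul_one, (commute_z _).left_comm, mul_assoc z, mul_assoc z,
      mul_assoc s]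
  _ = s * t⁻¹ * s := z_mul_z_mul _

def j : G := t * s * t⁻¹
def k : G := t⁻¹ * s * t

lemma j_mul_s : j * s = k := calc
  t * s * t⁻¹ * s = t * (s * t⁻¹ * s) := by group
  _ = t⁻¹ * s * t := by rw [← t_mul_s_mul_t, t_inv]; group

lemma k_mul_s : k * s = z * j := calc
  t⁻¹ * s * t * s = t⁻¹ * (s * t) ^ 3 * t⁻¹ * s⁻¹ * t⁻¹ := by rw [pow_three]; group
  _ = z * (t⁻¹ * t⁻¹ * s * t⁻¹) := by
    rw [s_mul_t_pow_three, s_inv, mul_one, (commute_z _).left_comm, mul_assoc z]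
  _ = z * j := by rw [t_inv_mul_t_inv]; rfl

lemma conj_s : t⁻¹ * s * t = k := rfl

lemma conj_j : t⁻¹ * j * t = s := by simp only [j]; group

lemma conj_k : t⁻¹ * k * t = j := calc
  t⁻¹ * (t⁻¹ * s * t) * t = t⁻¹ * t⁻¹ * s * (t * t) := by group
  _ = j := by rw [t_inv_mul_t_inv, ← t_inv]; rfl

lemma conj_z_mul (g : G) : t⁻¹ * (z * g) * t = z * (t⁻¹ * g * t) := by
  rw [(commute_z t⁻¹).left_comm, mul_assoc z]

lemma quat_mul_s_mem (b : Fin 8) : quat z s j k b * s ∈ Set.range (quat z s j k) := by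
  fin_cases b <;>
    simp [quat, Matrix.range_cons, mul_assoc z, s_mul_s, j_mul_s, k_mul_s, z_mul_z, z_mul_z_mul]

lemma quat_mul_z_mem (b : Fin 8) : quat z s j k b * z ∈ Set.range (quat z s j k) := by
  fin_cases b <;> simp [quat, Matrix.range_cons, mul_assoc z, (commute_z s).eq, (commute_z j).eq,
    (commute_z k).eq, z_mul_z, z_mul_z_mul]

lemma conj_quat_mem (b : Fin 8) : t⁻¹ * quat z s j k b * t ∈ Set.range (quat z s j k) := by
  fin_cases b <;>
    simp [quat, Matrix.range_cons, conj_s, conj_j, conj_k, conj_z_mul, (commute_z t⁻¹).eq]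

lemma t_pow_val_add_one (c : Fin 3) : t ^ ((c + 1 : Fin 3) : ℕ) = t ^ (c : ℕ) * t := by
  rw [Fin.val_add, Fin.val_one, ← pow_eq_pow_mod _ t_pow_three, pow_succ]

lemma normalForm_mul_of_mem_range (p : Fin 3 × Fin 8) (i : Fin 3) :
    normalForm t z s j k p * .of i ∈ Set.range (normalForm t z s j k) := by
  obtain ⟨c, b⟩ := p
  fin_cases i
  · obtain ⟨b', hb'⟩ := quat_mul_s_mem b
    exact ⟨(c, b'), by rw [normalForm, normalForm, hb', mul_assoc]; rfl⟩
  · obtain ⟨b', hb'⟩ := conj_quat_mem b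
    exact ⟨(c + 1, b'), by rw [normalForm, normalForm, hb', t_pow_val_add_one]; group; rfl⟩
  · obtain ⟨b', hb'⟩ := quat_mul_z_mem b
    exact ⟨(c, b'), by rw [normalForm, normalForm, hb', mul_assoc]; rfl⟩

lemma normalForm_surjective : Function.Surjective (normalForm t z s j k) := by
  refine Set.range_eq_univ.1 <| (Set.finite_range _).eq_univ_of_forall_mul_mem
    (PresentedGroup.closure_range_of _) ⟨(0, 0), by simp [normalForm, quat]⟩ ?_
  rintro _ ⟨p, rfl⟩ _ ⟨i, rfl⟩
  exact normalForm_mul_of_mem_range p i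

lemma card_le : Nat.card G ≤ 24 :=
  (Nat.card_le_card_of_surjective _ normalForm_surjective).trans (by simp)

def sSL : Matrix.SpecialLinearGroup (Fin 2) (ZMod 3) := ⟨!![0, 2; 1, 0], by decide⟩
def tSL : Matrix.SpecialLinearGroup (Fin 2) (ZMod 3) := ⟨!![1, 2; 0, 1], by decide⟩
def zSL : Matrix.SpecialLinearGroup (Fin 2) (ZMod 3) := ⟨!![2, 0; 0, 2], by decide⟩

lemma lift_rels_eq_one : ∀ r ∈ G4rels, FreeGroup.lift ![sSL, tSL, zSL] r = 1 := by
  simp only [G4rels, Set.mem_insert_iff, Set.mem_singleton_iff, forall_eq_or_imp, forall_eq,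
    map_mul, map_pow, map_inv, FreeGroup.lift_apply_of]
  decide

def toSL : G →* Matrix.SpecialLinearGroup (Fin 2) (ZMod 3) :=
  PresentedGroup.toGroup lift_rels_eq_one

lemma toSL_comp_normalForm : toSL ∘ normalForm t z s j k =
    normalForm tSL zSL sSL (tSL * sSL * tSL⁻¹) (tSL⁻¹ * sSL * tSL) := by
  funext p
  simp [map_normalForm, j, k, toSL, s, t, z, PresentedGroup.toGroup.of]

lemma normalForm_SL_bijective :
    Function.Bijective (normalForm tSL zSL sSL (tSL * sSL * tSL⁻¹) (tSL⁻¹ * sSL * tSL)) :=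
  (Fintype.bijective_iff_injective_and_card _).2 ⟨by decide, by decide⟩

lemma toSL_surjective : Function.Surjective toSL :=
  (toSL_comp_normalForm ▸ normalForm_SL_bijective.2).of_comp

lemma card_SL : Nat.card (Matrix.SpecialLinearGroup (Fin 2) (ZMod 3)) = 24 := by
  rw [← Nat.card_eq_of_bijective _ normalForm_SL_bijective]; simp

end G4

/-- The group presented by
`⟨s, t, z | s² = z, t³ = z², (st)³ = z², [s,z] = 1, [t,z] = 1, z² = 1⟩`
is isomorphic to `SL(2, 𝔽₃)` and has order `24`. -/
theorem stmt_17 :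
    Nonempty (PresentedGroup G4rels ≃* Matrix.SpecialLinearGroup (Fin 2) (ZMod 3)) ∧
      Nat.card (PresentedGroup G4rels) = 24 := by
  have : Finite (PresentedGroup G4rels) := Finite.of_surjective _ G4.normalForm_surjective
  have hcard : Nat.card (PresentedGroup G4rels) = 24 :=
    G4.card_le.antisymm (G4.card_SL ▸ Nat.card_le_card_of_surjective _ G4.toSL_surjective)
  have hbij : Function.Bijective G4.toSL :=
    (Nat.bijective_iff_surjective_and_card _).2 ⟨G4.toSL_surjective, hcard.trans G4.card_SL.symm⟩
  exact ⟨⟨MulEquiv.ofBijective G4.toSL hbij⟩, hcard⟩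
end
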